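/- arXiv:1102.5768 — 2 statements merged into one kernel-verified Lean document; each statement's English description precedes it below -/
import Mathlib

section
/- Let 1 < p ≤ 2. There exists a constant c > 0 (depending only on p) such that for all x, y ∈ ℝ^n with ‖x‖ + ‖y‖ > 0, one has ⟨F_p(x) − F_p(y), x − y⟩ ≥ c ‖x − y‖² / (‖x‖ + ‖y‖)^{2−p}. -/
open Real
open scoped RealInnerProductSpace

noncomputable def Fp {H : Type*} [NormedAddCommGroup H] [NormedSpace ℝ H] (p : ℝ) (x : H) : H :=
  open scoped Classical in
  if x = 0 then 0 else ‖x‖ ^ (p - 2) • x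

/-!
Expanding the inner product, `⟨F_p x − F_p y, x − y⟩` and `‖x − y‖²` are both affine in
`t = ⟨x, y⟩` once `a = ‖x‖` and `b = ‖y‖` are fixed, and Cauchy–Schwarz confines `t` to
`[-ab, ab]`; so it suffices to prove the inequality, with `c = p − 1`, at the two endpoints.
At `t = ab` it reads `(p − 1)(a − b)² ≤ (a − b)(a^{p−1} − b^{p−1})(a + b)^{2−p}`, which follows
from the tangent-line bound for the concave function `s ↦ s^{p−1}`. At `t = −ab` it reads
`(p − 1)(a + b)² ≤ (a + b)(a^{p−1} + b^{p−1})(a + b)^{2−p}`, which follows from the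
subadditivity of `s ↦ s^{p−1}`.
-/

theorem rpow_le_rpow_add_mul_sub {q a b : ℝ} (hq₀ : 0 ≤ q) (hq₁ : q ≤ 1) (ha : 0 < a)
    (hb : 0 ≤ b) : b ^ q ≤ a ^ q + q * a ^ (q - 1) * (b - a) := by
  have hbernoulli := rpow_one_add_le_one_add_mul_self (s := b / a - 1)
    (by linarith [div_nonneg hb ha.le]) hq₀ hq₁
  rw [add_sub_cancel, div_rpow hb ha.le, div_le_iff₀ (by positivity)] at hbernoulli
  calc b ^ q ≤ (1 + q * (b / a - 1)) * a ^ q := hbernoulli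
    _ = a ^ q + q * a ^ (q - 1) * (b - a) := by
      rw [rpow_sub_one ha.ne']
      field_simp

theorem rpow_sub_two_mul_self {q a : ℝ} (ha : 0 ≤ a) (hq : q ≠ 1) :
    a ^ (q - 2) * a = a ^ (q - 1) := by
  rw [← rpow_add_one' ha (by contrapose! hq; linarith)]
  ring_nf

theorem sub_one_mul_sub_sq_le {p a b : ℝ} (hp₁ : 1 ≤ p) (hp₂ : p ≤ 2) (ha : 0 ≤ a)
    (hb : 0 ≤ b) :
    (p - 1) * (a - b) ^ 2 ≤ (a - b) * (a ^ (p - 1) - b ^ (p - 1)) * (a + b) ^ (2 - p) := by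
  wlog hba : b ≤ a generalizing a b
  · have := this hb ha (le_of_not_ge hba)
    rw [add_comm b a] at this
    linear_combination this
  obtain rfl | hba := hba.eq_or_lt
  · simp
  have ha : 0 < a := hb.trans_lt hba
  have htangent := rpow_le_rpow_add_mul_sub (q := p - 1) (by linarith) (by linarith) ha hb
  rw [show p - 1 - 1 = p - 2 by ring] at htangent
  have hcancel : a ^ (p - 2) * a ^ (2 - p) = 1 := by
    rw [← rpow_add ha]
    norm_num
  calc (p - 1) * (a - b) ^ 2
      = (a - b) * ((p - 1) * a ^ (p - 2) * (a - b)) * a ^ (2 - p) := by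
        linear_combination (-((p - 1) * (a - b) ^ 2)) * hcancel
    _ ≤ (a - b) * (a ^ (p - 1) - b ^ (p - 1)) * a ^ (2 - p) := by
        gcongr
        linarith
    _ ≤ (a - b) * (a ^ (p - 1) - b ^ (p - 1)) * (a + b) ^ (2 - p) := by
        gcongr
        · exact mul_nonneg (by linarith) (sub_nonneg.2 (rpow_le_rpow hb hba.le (by linarith)))
        · linarith

theorem sub_one_mul_add_sq_le {p a b : ℝ} (hp₁ : 1 ≤ p) (hp₂ : p ≤ 2) (ha : 0 ≤ a)
    (hb : 0 ≤ b) :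
    (p - 1) * (a + b) ^ 2 ≤ (a + b) * (a ^ (p - 1) + b ^ (p - 1)) * (a + b) ^ (2 - p) := by
  have hcancel : (a + b) ^ (p - 1) * (a + b) ^ (2 - p) = a + b := by
    rw [← rpow_add' (by positivity) (by norm_num)]
    norm_num
  calc (p - 1) * (a + b) ^ 2
      ≤ (a + b) ^ 2 := mul_le_of_le_one_left (sq_nonneg _) (by linarith)
    _ = (a + b) * (a + b) ^ (p - 1) * (a + b) ^ (2 - p) := by rw [mul_assoc, hcancel]; ring
    _ ≤ (a + b) * (a ^ (p - 1) + b ^ (p - 1)) * (a + b) ^ (2 - p) := by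
        gcongr
        exact rpow_add_le_add_rpow ha hb (by linarith) (by linarith)

theorem sub_one_mul_sq_sub_two_mul_add_sq_le {p a b t : ℝ} (hp₁ : 1 < p) (hp₂ : p ≤ 2)
    (ha : 0 ≤ a) (hb : 0 ≤ b) (ht : |t| ≤ a * b) :
    (p - 1) * (a ^ 2 - 2 * t + b ^ 2) ≤
      (a ^ (p - 2) * a ^ 2 + b ^ (p - 2) * b ^ 2 - (a ^ (p - 2) + b ^ (p - 2)) * t) *
        (a + b) ^ (2 - p) := by
  have hE₁ := sub_one_mul_sub_sq_le hp₁.le hp₂ ha hb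
  have hE₂ := sub_one_mul_add_sq_le hp₁.le hp₂ ha hb
  rw [← rpow_sub_two_mul_self ha hp₁.ne', ← rpow_sub_two_mul_self hb hp₁.ne'] at hE₁ hE₂
  obtain ⟨htl, htu⟩ := abs_le.mp ht
  -- `hc` fixes the sign of the slope in `t` of the difference, hence which endpoint binds.
  rcases le_total ((a ^ (p - 2) + b ^ (p - 2)) * (a + b) ^ (2 - p)) (2 * (p - 1)) with hc | hc
  · nlinarith [mul_le_mul_of_nonneg_right hc (by linarith : 0 ≤ a * b + t)]
  · nlinarith [mul_le_mul_of_nonneg_right hc (by linarith : 0 ≤ a * b - t)]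

theorem Fp_eq_smul {H : Type*} [NormedAddCommGroup H] [NormedSpace ℝ H] (p : ℝ) (x : H) :
    Fp p x = ‖x‖ ^ (p - 2) • x := by
  unfold Fp
  split_ifs with hx <;> simp [hx]

theorem inner_Fp_sub_Fp_sub {E : Type*} [NormedAddCommGroup E] [InnerProductSpace ℝ E]
    (p : ℝ) (x y : E) :
    ⟪Fp p x - Fp p y, x - y⟫ = ‖x‖ ^ (p - 2) * ‖x‖ ^ 2 + ‖y‖ ^ (p - 2) * ‖y‖ ^ 2 -
      (‖x‖ ^ (p - 2) + ‖y‖ ^ (p - 2)) * ⟪x, y⟫ := by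
  simp only [Fp_eq_smul, inner_sub_left, inner_sub_right, real_inner_smul_left,
    real_inner_self_eq_norm_sq, real_inner_comm x y]
  ring

/-- Inequality (3.12) of the paper: for `1 < p ≤ 2` there is a constant `c > 0`, depending
only on `p`, such that for all `x, y ∈ ℝ^n` with `‖x‖ + ‖y‖ > 0`,
`⟨F_p x − F_p y, x − y⟩ ≥ c ‖x − y‖² / (‖x‖ + ‖y‖)^(2−p)`. -/
theorem Fp_inner_sub_ge_quantitative (p : ℝ) (hp1 : 1 < p) (hp2 : p ≤ 2) :
    ∃ c : ℝ, 0 < c ∧ ∀ (n : ℕ) (x y : EuclideanSpace ℝ (Fin n)), 0 < ‖x‖ + ‖y‖ →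
      ⟪Fp p x - Fp p y, x - y⟫ ≥ c * ‖x - y‖ ^ 2 / (‖x‖ + ‖y‖) ^ (2 - p) := by
  refine ⟨p - 1, by linarith, fun n x y hxy => ?_⟩
  rw [ge_iff_le, div_le_iff₀ (rpow_pos_of_pos hxy _), inner_Fp_sub_Fp_sub, norm_sub_sq_real]
  exact sub_one_mul_sq_sub_two_mul_add_sq_le hp1 hp2 (norm_nonneg x) (norm_nonneg y)
    (abs_real_inner_le_norm x y)
end

section
/- Let (Ω, μ) be a measure space, H a real inner product space, and 1 < p ≤ 2. Let σ₁, σ₂ : Ω → H be measurable functions in L^p (MemLp p). Then ∫ ⟨F_p(σ₁(x)) − F_p(σ₂(x)), σ₁(x) − σ₂(x)⟩ dμ(x) ≥ ∫ (‖σ₁(x)‖^{p−1} − ‖σ₂(x)‖^{p−1})(‖σ₁(x)‖ − ‖σ₂(x)‖) dμ(x) ≥ 0. -/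
open MeasureTheory Real
open scoped RealInnerProductSpace

/-!
`F_p x` is a nonnegative multiple of `x` of norm `‖x‖^(p-1)`. For vectors `u, v` aligned with
`a, b` in this sense, Cauchy–Schwarz on the cross terms `⟪u, b⟫, ⟪v, a⟫` gives
`⟪u - v, a - b⟫ ≥ (‖u‖ - ‖v‖)(‖a‖ - ‖b‖)`, and the right side is nonnegative because
`t ↦ t^(p-1)` is monotone. Integrability of the left integrand comes from the pointwise bound
`|⟪F_p a - F_p b, a - b⟫| ≤ 2 (‖a‖^p + ‖b‖^p)`.
-/

lemma Real.rpow_sub_one_mul_self {t : ℝ} (ht : 0 ≤ t) {q : ℝ} (hq : q ≠ 0) :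
    t ^ (q - 1) * t = t ^ q := by
  rw [← rpow_add_one' ht (by simpa using hq), sub_add_cancel]

lemma rpow_sub_mul_sub_nonneg {r : ℝ} (hr : 0 ≤ r) {s t : ℝ} (hs : 0 ≤ s) (ht : 0 ≤ t) :
    0 ≤ (s ^ r - t ^ r) * (s - t) :=
  ((monotoneOn_rpow_Ici_of_exponent_nonneg hr).monovaryOn monotoneOn_id).sub_mul_sub_nonneg
    (Set.mem_Ici.2 ht) (Set.mem_Ici.2 hs)

section InnerProductSpace

variable {H : Type*} [NormedAddCommGroup H] [InnerProductSpace ℝ H]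

lemma sub_norm_mul_sub_norm_le_inner_sub_sub {u v a b : H}
    (hu : ⟪u, a⟫ = ‖u‖ * ‖a‖) (hv : ⟪v, b⟫ = ‖v‖ * ‖b‖) :
    (‖u‖ - ‖v‖) * (‖a‖ - ‖b‖) ≤ ⟪u - v, a - b⟫ := by
  have hub : ⟪u, b⟫ ≤ ‖u‖ * ‖b‖ := real_inner_le_norm u b
  have hva : ⟪v, a⟫ ≤ ‖v‖ * ‖a‖ := real_inner_le_norm v a
  simp only [inner_sub_left, inner_sub_right]
  linarith

lemma Fp_eq_rpow_smul (p : ℝ) (x : H) : Fp p x = ‖x‖ ^ (p - 2) • x := by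
  unfold Fp
  split_ifs with h <;> simp [h]

lemma norm_Fp {p : ℝ} (hp : p ≠ 1) (x : H) : ‖Fp p x‖ = ‖x‖ ^ (p - 1) := by
  rw [Fp_eq_rpow_smul, norm_smul, norm_of_nonneg (rpow_nonneg (norm_nonneg x) _),
    show p - 2 = (p - 1) - 1 by ring, rpow_sub_one_mul_self (norm_nonneg x) (sub_ne_zero.2 hp)]

lemma inner_Fp_self (p : ℝ) (x : H) : ⟪Fp p x, x⟫ = ‖Fp p x‖ * ‖x‖ := by
  rw [Fp_eq_rpow_smul, real_inner_smul_self_left, norm_smul,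
    norm_of_nonneg (rpow_nonneg (norm_nonneg x) _), mul_assoc]

lemma rpow_sub_mul_sub_le_inner_Fp_sub_Fp {p : ℝ} (hp : p ≠ 1) (a b : H) :
    (‖a‖ ^ (p - 1) - ‖b‖ ^ (p - 1)) * (‖a‖ - ‖b‖) ≤ ⟪Fp p a - Fp p b, a - b⟫ := by
  rw [← norm_Fp hp, ← norm_Fp hp]
  exact sub_norm_mul_sub_norm_le_inner_sub_sub (inner_Fp_self p a) (inner_Fp_self p b)

lemma norm_inner_Fp_sub_Fp_le {p : ℝ} (hp : 1 < p) (a b : H) :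
    ‖⟪Fp p a - Fp p b, a - b⟫‖ ≤ 2 * (‖a‖ ^ p + ‖b‖ ^ p) := by
  have hmono := rpow_sub_mul_sub_nonneg (sub_nonneg.2 hp.le) (norm_nonneg a) (norm_nonneg b)
  have ha := rpow_sub_one_mul_self (norm_nonneg a) (q := p) (by positivity)
  have hb := rpow_sub_one_mul_self (norm_nonneg b) (q := p) (by positivity)
  calc ‖⟪Fp p a - Fp p b, a - b⟫‖ ≤ ‖Fp p a - Fp p b‖ * ‖a - b‖ := norm_inner_le_norm _ _
    _ ≤ (‖Fp p a‖ + ‖Fp p b‖) * (‖a‖ + ‖b‖) := by gcongr <;> exact norm_sub_le _ _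
    _ = (‖a‖ ^ (p - 1) + ‖b‖ ^ (p - 1)) * (‖a‖ + ‖b‖) := by rw [norm_Fp hp.ne', norm_Fp hp.ne']
    _ ≤ 2 * (‖a‖ ^ p + ‖b‖ ^ p) := by nlinarith

end InnerProductSpace

section Integral

variable {Ω H : Type*} [MeasurableSpace Ω] [NormedAddCommGroup H] [InnerProductSpace ℝ H]
  {μ : Measure Ω} {p : ℝ}

lemma MeasureTheory.MemLp.integrable_norm_rpow_of_ofReal {E : Type*} [NormedAddCommGroup E]
    {σ : Ω → E} (hp : 0 < p)
    (hσ : MemLp σ (ENNReal.ofReal p) μ) : Integrable (fun x => ‖σ x‖ ^ p) μ := by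
  simpa [ENNReal.toReal_ofReal hp.le] using
    hσ.integrable_norm_rpow (ENNReal.ofReal_pos.2 hp).ne' ENNReal.ofReal_ne_top

lemma MeasureTheory.AEStronglyMeasurable.Fp_comp {σ : Ω → H} (hσ : AEStronglyMeasurable σ μ) :
    AEStronglyMeasurable (fun x => Fp p (σ x)) μ := by
  simp only [Fp_eq_rpow_smul]
  exact (hσ.norm.aemeasurable.pow_const _).aestronglyMeasurable.smul hσ

lemma integrable_inner_Fp_sub_Fp (hp : 1 < p) {σ₁ σ₂ : Ω → H}
    (h₁ : MemLp σ₁ (ENNReal.ofReal p) μ) (h₂ : MemLp σ₂ (ENNReal.ofReal p) μ) :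
    Integrable (fun x => ⟪Fp p (σ₁ x) - Fp p (σ₂ x), σ₁ x - σ₂ x⟫) μ := by
  have hp0 : 0 < p := by linarith
  refine Integrable.mono' (((h₁.integrable_norm_rpow_of_ofReal hp0).add
    (h₂.integrable_norm_rpow_of_ofReal hp0)).const_mul 2) ?_
    (.of_forall fun x => norm_inner_Fp_sub_Fp_le hp (σ₁ x) (σ₂ x))
  exact (h₁.aestronglyMeasurable.Fp_comp.sub h₂.aestronglyMeasurable.Fp_comp).inner
    (h₁.aestronglyMeasurable.sub h₂.aestronglyMeasurable)

end Integral

theorem integral_Fp_monotone_general {Ω H : Type*} [MeasurableSpace Ω]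
    [NormedAddCommGroup H] [InnerProductSpace ℝ H] (μ : Measure Ω)
    (p : ℝ) (hp1 : 1 < p) (σ₁ σ₂ : Ω → H)
    (h₁ : MemLp σ₁ (ENNReal.ofReal p) μ) (h₂ : MemLp σ₂ (ENNReal.ofReal p) μ) :
    ∫ x, ⟪Fp p (σ₁ x) - Fp p (σ₂ x), σ₁ x - σ₂ x⟫ ∂μ ≥
      ∫ x, (‖σ₁ x‖ ^ (p - 1) - ‖σ₂ x‖ ^ (p - 1)) * (‖σ₁ x‖ - ‖σ₂ x‖) ∂μ ∧
    ∫ x, (‖σ₁ x‖ ^ (p - 1) - ‖σ₂ x‖ ^ (p - 1)) * (‖σ₁ x‖ - ‖σ₂ x‖) ∂μ ≥ 0 := by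
  have hnonneg : ∀ x, 0 ≤ (‖σ₁ x‖ ^ (p - 1) - ‖σ₂ x‖ ^ (p - 1)) * (‖σ₁ x‖ - ‖σ₂ x‖) := fun x =>
    rpow_sub_mul_sub_nonneg (sub_nonneg.2 hp1.le) (norm_nonneg _) (norm_nonneg _)
  exact ⟨integral_mono_of_nonneg (.of_forall hnonneg) (integrable_inner_Fp_sub_Fp hp1 h₁ h₂)
      (.of_forall fun x => rpow_sub_mul_sub_le_inner_Fp_sub_Fp hp1.ne' (σ₁ x) (σ₂ x)),
    integral_nonneg hnonneg⟩

/-- The paper's monotonicity estimate for the Gâteaux derivative of the viscous energy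
functional: for `1 < p ≤ 2` and `σ₁, σ₂ ∈ L^p(Ω; H)`,
`∫ ⟨F_p(σ₁) − F_p(σ₂), σ₁ − σ₂⟩ dμ ≥ ∫ (‖σ₁‖^(p−1) − ‖σ₂‖^(p−1))(‖σ₁‖ − ‖σ₂‖) dμ ≥ 0`. -/
theorem integral_Fp_monotone {Ω H : Type*} [MeasurableSpace Ω]
    [NormedAddCommGroup H] [InnerProductSpace ℝ H] (μ : Measure Ω)
    (p : ℝ) (hp1 : 1 < p) (hp2 : p ≤ 2) (σ₁ σ₂ : Ω → H)
    (h₁ : MemLp σ₁ (ENNReal.ofReal p) μ) (h₂ : MemLp σ₂ (ENNReal.ofReal p) μ) :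
    ∫ x, ⟪Fp p (σ₁ x) - Fp p (σ₂ x), σ₁ x - σ₂ x⟫ ∂μ ≥
      ∫ x, (‖σ₁ x‖ ^ (p - 1) - ‖σ₂ x‖ ^ (p - 1)) * (‖σ₁ x‖ - ‖σ₂ x‖) ∂μ ∧
    ∫ x, (‖σ₁ x‖ ^ (p - 1) - ‖σ₂ x‖ ^ (p - 1)) * (‖σ₁ x‖ - ‖σ₂ x‖) ∂μ ≥ 0 :=
  integral_Fp_monotone_general μ p hp1 σ₁ σ₂ h₁ h₂
end
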